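/- Let K be a real quadratic field (a number field of degree 2 with signature (2,0)) and let D_K be the absolute value of its discriminant. Then the Euclidean minimum satisfies M(K) ≤ 2^{−1} · 3^{−1/2} · D_K^{1/2}. -/

import Mathlib

/-!
Write `𝓞 K = ℤ ⊕ ℤ ω` with `ω ^ 2 = E + F ω`. Then `D_K = F ^ 2 + 4 E`, which is positive because
`K` has no complex places, and completing the square gives `N(u + v ω) = (u + F v / 2) ^ 2 - c ^ 2`
with `c = |v| √D_K / 2`. Given `α = a + b ω`, an integer translate of `b` makes `|v| ≤ 1 / 2`, so
`c ≤ √D_K / 4`, and an integer translate of `a` then makes `|N(α - β)| ≤ max (1 / 4) c`. Both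
`1 / 4` and `√D_K / 4` are at most `√D_K / (2 √3)` because `D_K ≥ 1`.
-/

open NumberField

/-- The Euclidean minimum of a number field `K`:
`M(K) = sup_{α ∈ K} inf_{β ∈ ℤ_K} |Nm_{K/ℚ}(α − β)|`. -/
noncomputable def euclideanMinimum (K : Type*) [Field K] [NumberField K] : ℝ :=
  ⨆ α : K, ⨅ β : 𝓞 K, ((|Algebra.norm ℚ (α - (β : K))| : ℚ) : ℝ)

theorem exists_int_abs_sq_sub_sq_le (τ c : ℝ) (hc : 0 ≤ c) :
    ∃ p : ℤ, |(τ - p) ^ 2 - c ^ 2| ≤ max (1 / 4) c := by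
  rcases le_or_gt c 1 with hc1 | hc1
  · have hτ : |τ - round τ| ≤ 1 / 2 := abs_sub_round τ
    have hsq : (τ - round τ) ^ 2 ≤ 1 / 4 := by
      nlinarith [sq_abs (τ - round τ), abs_nonneg (τ - round τ)]
    refine ⟨round τ, abs_sub_le_iff.2 ⟨?_, ?_⟩⟩
    · nlinarith [le_max_left (1 / 4 : ℝ) c]
    · nlinarith [le_max_right (1 / 4 : ℝ) c, sq_nonneg (τ - round τ)]
  · -- `τ - p` is taken in `[L, L + 1)`, where `L ^ 2 = c ^ 2 - c` and `(L + 1) ^ 2 ≤ c ^ 2 + c`.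
    set L := √(c ^ 2 - c)
    have hL0 : 0 ≤ L := Real.sqrt_nonneg _
    have hL : L ^ 2 = c ^ 2 - c := Real.sq_sqrt (by nlinarith)
    have hLc : L ≤ c - 1 / 2 := by nlinarith
    have hτ : τ - ⌊τ - L⌋ = L + Int.fract (τ - L) := by rw [Int.fract]; ring
    have hf0 := Int.fract_nonneg (τ - L)
    have hf1 := Int.fract_lt_one (τ - L)
    refine ⟨⌊τ - L⌋, le_max_of_le_right (abs_sub_le_iff.2 ⟨?_, ?_⟩)⟩ <;> rw [hτ] <;> nlinarith

theorem exists_int_abs_sq_add_mul_sub_mul_sq_le (E F : ℝ) (hD : 3 / 4 ≤ F ^ 2 + 4 * E) (a b : ℝ) :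
    ∃ p q : ℤ, |(a - p) ^ 2 + F * (a - p) * (b - q) - E * (b - q) ^ 2| ≤
      √(F ^ 2 + 4 * E) / (2 * √3) := by
  set v := b - round b
  have hv : |v| ≤ 1 / 2 := abs_sub_round b
  have h3 : √3 ^ 2 = 3 := Real.sq_sqrt (by norm_num)
  have h3pos : 0 < √3 := by positivity
  have hD0 : 0 ≤ √(F ^ 2 + 4 * E) := Real.sqrt_nonneg _
  obtain ⟨p, hp⟩ := exists_int_abs_sq_sub_sq_le (a + F * v / 2) (|v| * √(F ^ 2 + 4 * E) / 2)
    (by positivity)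
  refine ⟨p, round b, ?_⟩
  have hsq : (a - p) ^ 2 + F * (a - p) * v - E * v ^ 2 =
      (a + F * v / 2 - p) ^ 2 - (|v| * √(F ^ 2 + 4 * E) / 2) ^ 2 := by
    rw [div_pow, mul_pow, sq_abs, Real.sq_sqrt (by linarith)]
    ring
  rw [hsq]
  refine hp.trans (max_le ?_ ?_)
  · rw [le_div_iff₀ (by positivity)]
    refine Real.le_sqrt_of_sq_le ?_
    nlinarith
  · rw [le_div_iff₀ (by positivity)]
    have hv3 : |v| * √3 ≤ 1 := by nlinarith [abs_nonneg v]
    nlinarith [mul_le_mul_of_nonneg_right hv3 hD0]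

namespace Module.Basis

variable {R S : Type*} [CommRing R] [CommRing S] [Algebra R S] {b : Basis (Fin 2) R S} {E F : R}

theorem mul_apply_one_of_fin_two (hb0 : b 0 = 1) (hsq : b 1 * b 1 = E • 1 + F • b 1) (x : S) :
    x * b 1 = (E * b.repr x 1) • b 0 + (b.repr x 0 + F * b.repr x 1) • b 1 := by
  conv_lhs => rw [← b.sum_repr x]
  rw [Fin.sum_univ_two, add_mul, smul_mul_assoc, smul_mul_assoc, hb0, one_mul, hsq]
  module

theorem leftMulMatrix_of_fin_two (hb0 : b 0 = 1) (hsq : b 1 * b 1 = E • 1 + F • b 1) (x : S) :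
    Algebra.leftMulMatrix b x =
      !![b.repr x 0, E * b.repr x 1; b.repr x 1, b.repr x 0 + F * b.repr x 1] := by
  ext i j
  fin_cases j
  · fin_cases i <;> simp [Algebra.leftMulMatrix_eq_repr_mul, hb0]
  · fin_cases i <;> simp [Algebra.leftMulMatrix_eq_repr_mul, mul_apply_one_of_fin_two hb0 hsq]

theorem norm_eq_of_fin_two (hb0 : b 0 = 1) (hsq : b 1 * b 1 = E • 1 + F • b 1) (x : S) :
    Algebra.norm R x = b.repr x 0 ^ 2 + F * b.repr x 0 * b.repr x 1 - E * b.repr x 1 ^ 2 := by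
  rw [Algebra.norm_eq_matrix_det b, leftMulMatrix_of_fin_two hb0 hsq, Matrix.det_fin_two_of]
  ring

theorem trace_eq_of_fin_two (hb0 : b 0 = 1) (hsq : b 1 * b 1 = E • 1 + F • b 1) (x : S) :
    Algebra.trace R S x = 2 * b.repr x 0 + F * b.repr x 1 := by
  rw [Algebra.trace_eq_matrix_trace b, leftMulMatrix_of_fin_two hb0 hsq, Matrix.trace_fin_two_of]
  ring

theorem discr_eq_of_fin_two (hb0 : b 0 = 1) (hsq : b 1 * b 1 = E • 1 + F • b 1) :
    Algebra.discr R b = F ^ 2 + 4 * E := by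
  have htr := trace_eq_of_fin_two hb0 hsq
  have htr0 : Algebra.trace R S (b 0) = 2 := by simp [htr]
  have htr1 : Algebra.trace R S (b 1) = F := by simp [htr]
  have htr11 : Algebra.trace R S (b 1 * b 1) = E * 2 + F * F := by
    rw [hsq, ← hb0, map_add, map_smul, map_smul, htr0, htr1, smul_eq_mul, smul_eq_mul]
  rw [Algebra.discr_def, Matrix.det_fin_two]
  simp only [Algebra.traceMatrix_apply, Algebra.traceForm_apply, htr11, hb0, one_mul, mul_one]
  rw [← hb0, htr0, htr1]
  ring

theorem exists_fin_two_apply_zero_eq_one [IsBezout R] (b : Basis (Fin 2) R S) :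
    ∃ b' : Basis (Fin 2) R S, b' 0 = 1 := by
  have hone : b.repr 1 0 • b 0 + b.repr 1 1 • b 1 = 1 := by
    rw [← Fin.sum_univ_two (fun i ↦ b.repr 1 i • b i), b.sum_repr]
  have hcop : IsCoprime (b.repr 1 0) (b.repr 1 1) := by
    refine isRelPrime_iff_isCoprime.1 fun d ⟨n₀, hn₀⟩ ⟨n₁, hn₁⟩ ↦ ?_
    -- `d` divides `1` in `S`, so its norm `d ^ 2` is a unit of `R`
    have hd : IsUnit (algebraMap R S d) :=
      isUnit_of_dvd_one ⟨n₀ • b 0 + n₁ • b 1, by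
        rw [← hone, hn₀, hn₁]
        simp only [Algebra.smul_def, map_mul]
        ring⟩
    simpa [Algebra.norm_algebraMap_of_basis b] using hd.map (Algebra.norm R)
  obtain ⟨x, y, hxy⟩ := hcop
  have hdet : IsUnit (b.det ![1, -y • b 0 + x • b 1]) := by
    have hmat : b.toMatrix ![1, -y • b 0 + x • b 1] = !![b.repr 1 0, -y; b.repr 1 1, x] := by
      ext i j
      fin_cases i <;> fin_cases j <;> simp [Basis.toMatrix_apply]
    rw [Basis.det_apply, hmat, Matrix.det_fin_two_of]
    convert isUnit_one
    linear_combination hxy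
  obtain ⟨hli, hspan⟩ := (is_basis_iff_det b).2 hdet
  exact ⟨Basis.mk hli hspan.ge, by simp⟩

end Module.Basis

section

variable {K : Type*} [Field K] [NumberField K]

theorem euclideanMinimum_le_of_forall_exists {c : ℝ} (hc : 0 ≤ c)
    (h : ∀ α : K, ∃ β : 𝓞 K, ((|Algebra.norm ℚ (α - (β : K))| : ℚ) : ℝ) ≤ c) :
    euclideanMinimum K ≤ c :=
  Real.iSup_le (fun α ↦ (h α).elim fun β hβ ↦
    ciInf_le_of_le ⟨0, by rintro _ ⟨γ, rfl⟩; positivity⟩ β hβ) hc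

theorem exists_abs_norm_sub_le_of_finrank_eq_two (hn : Module.finrank ℚ K = 2)
    (hD : 0 < discr K) (α : K) :
    ∃ β : 𝓞 K, ((|Algebra.norm ℚ (α - (β : K))| : ℚ) : ℝ) ≤ √(discr K) / (2 * √3) := by
  obtain ⟨bZ, hbZ0⟩ := Module.Basis.exists_fin_two_apply_zero_eq_one
    (Module.finBasisOfFinrankEq ℤ (𝓞 K) ((RingOfIntegers.rank K).trans hn))
  set E := bZ.repr (bZ 1 * bZ 1) 0
  set F := bZ.repr (bZ 1 * bZ 1) 1
  have hsqZ : bZ 1 * bZ 1 = E • 1 + F • bZ 1 := by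
    rw [← hbZ0, ← Fin.sum_univ_two (fun i ↦ bZ.repr (bZ 1 * bZ 1) i • bZ i), bZ.sum_repr]
  have hdiscr : discr K = F ^ 2 + 4 * E := by
    rw [← discr_eq_discr K bZ, Module.Basis.discr_eq_of_fin_two hbZ0 hsqZ]
  let b := bZ.localizationLocalization ℚ (nonZeroDivisors ℤ) K
  have hb0 : b 0 = 1 := by
    simp [b, Module.Basis.localizationLocalization_apply, hbZ0]
  have hsq : b 1 * b 1 = (E : ℚ) • 1 + (F : ℚ) • b 1 := by
    simp only [b, Module.Basis.localizationLocalization_apply, ← map_mul, hsqZ]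
    simp [Algebra.smul_def]
  have hD1 : (1 : ℝ) ≤ (F : ℝ) ^ 2 + 4 * E := by exact_mod_cast hdiscr ▸ hD
  obtain ⟨p, q, hpq⟩ :=
    exists_int_abs_sq_add_mul_sub_mul_sq_le E F (by linarith) (b.repr α 0) (b.repr α 1)
  have hrepr : ∀ i, b.repr (α - (p • 1 + q • bZ 1 : 𝓞 K)) i = b.repr α i - ![(p : ℚ), q] i := by
    intro i
    rw [map_sub, Finsupp.sub_apply, RingOfIntegers.coe_eq_algebraMap,
      Module.Basis.localizationLocalization_repr_algebraMap, ← hbZ0]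
    fin_cases i <;> simp [-zsmul_eq_mul]
  refine ⟨p • 1 + q • bZ 1, ?_⟩
  rw [Module.Basis.norm_eq_of_fin_two hb0 hsq, hrepr, hrepr, hdiscr]
  push_cast
  simpa using hpq

end

theorem euclideanMinimum_le_real_quadratic_general (K : Type*) [Field K] [NumberField K]
    (hn : Module.finrank ℚ K = 2)
    (hs : InfinitePlace.nrComplexPlaces K = 0)
    (DK : ℝ) (hD : DK = |(NumberField.discr K : ℝ)|) :
    euclideanMinimum K ≤ 2⁻¹ * (3 : ℝ) ^ (-(1 : ℝ) / 2) * DK ^ ((1 : ℝ) / 2) := by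
  have hpos : 0 < discr K := by
    rw [← Int.sign_eq_one_iff_pos, sign_discr, hs, pow_zero]
  have hDK : DK = discr K := by rw [hD, abs_of_pos (by exact_mod_cast hpos)]
  have hrhs : 2⁻¹ * (3 : ℝ) ^ (-(1 : ℝ) / 2) * DK ^ ((1 : ℝ) / 2) = √(discr K) / (2 * √3) := by
    rw [hDK, neg_div, Real.rpow_neg (by norm_num), ← Real.sqrt_eq_rpow, ← Real.sqrt_eq_rpow]
    ring
  rw [hrhs]
  exact euclideanMinimum_le_of_forall_exists (by positivity)
    (exists_abs_norm_sub_le_of_finrank_eq_two hn hpos)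

/-- Table 4.2 entry: if `K` is a real quadratic field (degree `2`, signature `(2,0)`) and `D_K` is the absolute value of its discriminant,
then the Euclidean minimum satisfies the bound below. -/
theorem euclideanMinimum_le_real_quadratic (K : Type*) [Field K] [NumberField K]
    (hn : Module.finrank ℚ K = 2)
    (hr : InfinitePlace.nrRealPlaces K = 2) (hs : InfinitePlace.nrComplexPlaces K = 0)
    (DK : ℝ) (hD : DK = |(NumberField.discr K : ℝ)|) :
    euclideanMinimum K ≤ 2⁻¹ * (3 : ℝ) ^ (-(1 : ℝ) / 2) * DK ^ ((1 : ℝ) / 2) :=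
  euclideanMinimum_le_real_quadratic_general K hn hs DK hD
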